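/- The coefficients of e are bounded by 1: for all integers i ≥ k ≥ 2 one has 0 < q_{i,k}/q_{k,k} ≤ 1; consequently every coefficient of the formal power series e has absolute value at most 1, so e has geometrically bounded coefficients (with C = R = 1). -/

import Mathlib

/- STATEMENT 17: The coefficients of e are bounded by 1: 0 < q_{i,k}/q_{k,k} ≤ 1
   for i ≥ k ≥ 2, hence every coefficient of e has absolute value ≤ 1, so e has
   geometrically bounded coefficients with C = R = 1. -/

/-- The rising factorial (1/2)^{\overline{k−1}} = (1/2)(1/2+1)⋯(1/2+k−2). -/
def rise (k : ℕ) : ℚ := ∏ j ∈ Finset.range (k - 1), ((1 : ℚ) / 2 + j)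

/-- q_{i,k} = (i−1)! / (4^{k−1}·(i−k)!·(i+k−1)!·(1/2)^{\overline{k−1}}). -/
def q (i k : ℕ) : ℚ :=
  (Nat.factorial (i - 1) : ℚ) /
    (4 ^ (k - 1) * (Nat.factorial (i - k) : ℚ) * (Nat.factorial (i + k - 1) : ℚ) * rise k)

/-- The series e, with coefficient q_{i,k}/q_{k,k} at x^k z^i for i ≥ k ≥ 2
and zero coefficient at every other monomial. -/
noncomputable def eS : MvPowerSeries (Fin 3) ℂ :=
  fun d => if 2 ≤ d 0 ∧ d 1 = 0 ∧ d 0 ≤ d 2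
    then ((q (d 2) (d 0) / q (d 0) (d 0) : ℚ) : ℂ) else 0

/- For `1 ≤ k ≤ i` one has `q (i+1) k / q i k = i / ((i - k + 1) (i + k)) ≤ 1`,
so `i ↦ q i k` is antitone on `[k, ∞)` and the ratio `q i k / q k k` lies in `(0, 1]`. -/

lemma rise_pos (k : ℕ) : 0 < rise k :=
  Finset.prod_pos fun j _ => by positivity

lemma q_pos (i k : ℕ) : 0 < q i k := by
  unfold q
  have := rise_pos k
  positivity

lemma q_succ_mul {i k : ℕ} (hk : 1 ≤ k) (hki : k ≤ i) :
    q (i + 1) k * (((i + 1 - k : ℕ) : ℚ) * (i + k)) = i * q i k := by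
  obtain ⟨m, rfl⟩ : ∃ m, k = m + 1 := ⟨k - 1, by omega⟩
  obtain ⟨n, rfl⟩ : ∃ n, i = m + 1 + n := ⟨i - (m + 1), by omega⟩
  have hr := (rise_pos (m + 1)).ne'
  simp only [q, show m + 1 + n + 1 - 1 = m + n + 1 by omega, show m + 1 + n - 1 = m + n by omega,
    show m + 1 + n + 1 - (m + 1) = n + 1 by omega, show m + 1 + n - (m + 1) = n by omega,
    show m + 1 + n + 1 + (m + 1) - 1 = (2 * m + n + 1) + 1 by omega,
    show m + 1 + n + (m + 1) - 1 = 2 * m + n + 1 by omega, Nat.factorial_succ]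
  push_cast
  field_simp
  ring

lemma q_succ_le {i k : ℕ} (hk : 1 ≤ k) (hki : k ≤ i) : q (i + 1) k ≤ q i k := by
  have hsub : 1 ≤ i + 1 - k := by omega
  have hfac : (i : ℚ) ≤ ((i + 1 - k : ℕ) : ℚ) * (i + k) := by
    have : (1 : ℚ) ≤ ((i + 1 - k : ℕ) : ℚ) := by exact_mod_cast hsub
    nlinarith
  have hpos : (0 : ℚ) < ((i + 1 - k : ℕ) : ℚ) * (i + k) := by positivity
  rw [← mul_le_mul_iff_of_pos_right hpos, q_succ_mul hk hki, mul_comm]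
  exact mul_le_mul_of_nonneg_left hfac (q_pos i k).le

lemma q_le_q_self {i k : ℕ} (hk : 1 ≤ k) (hki : k ≤ i) : q i k ≤ q k k :=
  antitoneOn_nat_Ici_of_succ_le (f := (q · k)) (fun _ hn => q_succ_le hk hn)
    Set.self_mem_Ici hki hki

lemma q_div_q_self_mem_Ioc {i k : ℕ} (hk : 1 ≤ k) (hki : k ≤ i) :
    0 < q i k / q k k ∧ q i k / q k k ≤ 1 :=
  ⟨div_pos (q_pos i k) (q_pos k k), div_le_one_of_le₀ (q_le_q_self hk hki) (q_pos k k).le⟩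

lemma norm_coeff_eS_le_one (d : Fin 3 →₀ ℕ) : ‖MvPowerSeries.coeff d eS‖ ≤ 1 := by
  rw [MvPowerSeries.coeff_apply, eS]
  split_ifs with h
  · obtain ⟨hpos, hle⟩ := q_div_q_self_mem_Ioc (one_le_two.trans h.1) h.2.2
    rw [Complex.norm_ratCast, abs_of_pos (by exact_mod_cast hpos)]
    exact_mod_cast hle
  · simp

theorem e_coefficients_bounded_by_one :
    (∀ i k : ℕ, 2 ≤ k → k ≤ i → 0 < q i k / q k k ∧ q i k / q k k ≤ 1) ∧
    (∀ d : Fin 3 →₀ ℕ, ‖MvPowerSeries.coeff d eS‖ ≤ 1) ∧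
    -- geometric boundedness with C = R = 1
    (∀ d : Fin 3 →₀ ℕ, ‖MvPowerSeries.coeff d eS‖ ≤
      1 * 1 ^ (d.sum fun _ m => m)) :=
  ⟨fun _ _ hk hki => q_div_q_self_mem_Ioc (one_le_two.trans hk) hki, norm_coeff_eS_le_one,
    fun d => by simpa using norm_coeff_eS_le_one d⟩
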